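/- Let X be a compact topological space and (Y,d) a boundedly compact metric space. If (f_n) is a sequence of cliquish functions from X to Y that is uniformly bounded and finitely equicontinuous, then there is a subsequence (f_{n_k}) converging uniformly on X to a cliquish function. -/

import Mathlib

/-!
Compactness of `X` turns finite equicontinuity into uniform nets: for every `ε > 0` there is a
finite set `T ⊆ X` such that each point of `X` is, simultaneously for all `f_n`, `ε`-close to a
point of `T`. The union `D` of such nets for `ε = 1/(m+1)` is countable, so the compactness of the
countable product `K^D` (with `K` the compact set containing all values) gives a subsequence
converging at every point of `D`. Through the nets, this subsequence is uniformly Cauchy, hence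
converges uniformly since `Y` is complete, and an `ε/3` argument shows that a uniform limit of
cliquish functions is cliquish.
-/

open Set Filter Topology Metric Bornology

/-- Finite equicontinuity of a family `E` at a point `x`. -/
def FinEquicontAt {X Y : Type*} [TopologicalSpace X] [MetricSpace Y]
    (E : Set (X → Y)) (x : X) : Prop :=
  ∀ ε > (0 : ℝ), ∃ 𝓑 : Finset (Set X), ⋃₀ (𝓑 : Set (Set X)) ∈ 𝓝 x ∧
    ∀ f ∈ E, ∀ B ∈ 𝓑, ∀ p ∈ B, ∀ q ∈ B, dist (f p) (f q) < ε

/-- Finite equicontinuity of a family `E`. -/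
def FinEquicont {X Y : Type*} [TopologicalSpace X] [MetricSpace Y]
    (E : Set (X → Y)) : Prop :=
  ∀ x : X, FinEquicontAt E x

/-- A function is locally bounded if every point has an open neighbourhood with bounded image. -/
def LocBounded {X Y : Type*} [TopologicalSpace X] [MetricSpace Y] (f : X → Y) : Prop :=
  ∀ x : X, ∃ U : Set X, IsOpen U ∧ x ∈ U ∧ IsBounded (f '' U)

/-- A function is cliquish if every nonempty open set contains a nonempty open set
on which the oscillation of `f` is less than `ε`. -/
def Cliquish {X Y : Type*} [TopologicalSpace X] [MetricSpace Y] (f : X → Y) : Prop :=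
  ∀ ε > (0 : ℝ), ∀ U : Set X, IsOpen U → U.Nonempty →
    ∃ O : Set X, IsOpen O ∧ O.Nonempty ∧ O ⊆ U ∧ ∀ p ∈ O, ∀ q ∈ O, dist (f p) (f q) < ε

section Nets

variable {X Y : Type*} [TopologicalSpace X] [CompactSpace X] [MetricSpace Y] {E : Set (X → Y)}

lemma FinEquicont.exists_finite_cover (hE : FinEquicont E) {ε : ℝ} (hε : 0 < ε) :
    ∃ 𝓑 : Finset (Set X), ⋃₀ (𝓑 : Set (Set X)) = univ ∧
      ∀ f ∈ E, ∀ B ∈ 𝓑, ∀ p ∈ B, ∀ q ∈ B, dist (f p) (f q) < ε := by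
  choose 𝓑 h𝓑 hosc using fun x => hE x ε hε
  obtain ⟨t, -, ht⟩ := isCompact_univ.elim_nhds_subcover _ fun x _ => h𝓑 x
  refine ⟨t.biUnion 𝓑, eq_univ_of_univ_subset fun x hx => ?_, fun f hf B hB => ?_⟩
  · obtain ⟨y, hy, B, hB, hxB⟩ := mem_iUnion₂.1 (ht hx)
    exact ⟨B, Finset.mem_coe.2 (Finset.mem_biUnion.2 ⟨y, hy, hB⟩), hxB⟩
  · obtain ⟨y, -, hB⟩ := Finset.mem_biUnion.1 hB
    exact hosc y f hf B hB

lemma FinEquicont.exists_finite_net (hE : FinEquicont E) {ε : ℝ} (hε : 0 < ε) :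
    ∃ T : Finset X, ∀ x, ∃ t ∈ T, ∀ f ∈ E, dist (f x) (f t) < ε := by
  classical
  obtain ⟨𝓑, hcover, hosc⟩ := hE.exists_finite_cover hε
  let center : (𝓑.filter (·.Nonempty)) → X := fun B => (Finset.mem_filter.1 B.2).2.some
  refine ⟨Finset.univ.image center, fun x => ?_⟩
  obtain ⟨B, hB, hxB⟩ := mem_sUnion.1 (hcover ▸ mem_univ x)
  have hB' : B ∈ 𝓑.filter (·.Nonempty) := Finset.mem_filter.2 ⟨hB, x, hxB⟩
  refine ⟨center ⟨B, hB'⟩, Finset.mem_image_of_mem _ (Finset.mem_univ _), fun f hf => ?_⟩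
  exact hosc f hf B hB x hxB _ (Finset.mem_filter.1 hB').2.some_mem

lemma FinEquicont.exists_countable_net (hE : FinEquicont E) :
    ∃ D : Set X, D.Countable ∧
      ∀ ε > 0, ∃ T : Finset X, ↑T ⊆ D ∧ ∀ x, ∃ t ∈ T, ∀ f ∈ E, dist (f x) (f t) < ε := by
  choose T hT using fun m : ℕ => hE.exists_finite_net (Nat.one_div_pos_of_nat (n := m))
  refine ⟨⋃ m, (T m : Set X), countable_iUnion fun m => (T m).countable_toSet, fun ε hε => ?_⟩
  obtain ⟨m, hm⟩ := exists_nat_one_div_lt hε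
  refine ⟨T m, subset_iUnion (fun m => (T m : Set X)) m, fun x => ?_⟩
  obtain ⟨t, ht, hdist⟩ := hT m x
  exact ⟨t, ht, fun f hf => (hdist f hf).trans hm⟩

end Nets

lemma exists_subseq_tendsto_on_countable {X Y : Type*} [TopologicalSpace Y]
    [FirstCountableTopology Y] {F : ℕ → X → Y} {D : Set X} (hD : D.Countable) {K : Set Y}
    (hK : IsCompact K) (hFK : ∀ n, ∀ x ∈ D, F n x ∈ K) :
    ∃ φ : ℕ → ℕ, StrictMono φ ∧ ∀ x ∈ D, ∃ y, Tendsto (fun k => F (φ k) x) atTop (𝓝 y) := by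
  have := hD.to_subtype
  obtain ⟨L, -, φ, hφ, hL⟩ := (isCompact_univ_pi fun _ : D => hK).tendsto_subseq
    (x := fun n (x : D) => F n x) fun n x _ => hFK n x x.2
  exact ⟨φ, hφ, fun x hx => ⟨L ⟨x, hx⟩, tendsto_pi_nhds.1 hL ⟨x, hx⟩⟩⟩

lemma uniformCauchySeqOn_univ_of_finite_nets {X Y : Type*} [PseudoMetricSpace Y] {E : Set (X → Y)}
    {F : ℕ → X → Y} (hFE : ∀ n, F n ∈ E) {D : Set X}
    (hnet : ∀ ε > 0, ∃ T : Finset X, ↑T ⊆ D ∧ ∀ x, ∃ t ∈ T, ∀ f ∈ E, dist (f x) (f t) < ε)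
    (hD : ∀ x ∈ D, CauchySeq fun n => F n x) :
    UniformCauchySeqOn F atTop univ := by
  intro u hu
  obtain ⟨ε, hε, hεu⟩ := mem_uniformity_dist.1 hu
  obtain ⟨T, hTD, hT⟩ := hnet (ε / 3) (by positivity)
  have hcauchyT : ∀ᶠ p : ℕ × ℕ in atTop, ∀ t ∈ T, dist (F p.1 t) (F p.2 t) < ε / 3 :=
    (eventually_all_finset T).2 fun t ht =>
      cauchySeq_iff_tendsto.1 (hD t (hTD ht)) (dist_mem_uniformity (by positivity))
  rw [prod_atTop_atTop_eq]
  filter_upwards [hcauchyT] with p hp x _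
  obtain ⟨t, ht, hxt⟩ := hT x
  refine hεu ?_
  calc dist (F p.1 x) (F p.2 x)
      ≤ dist (F p.1 x) (F p.1 t) + dist (F p.1 t) (F p.2 t) + dist (F p.2 t) (F p.2 x) :=
        dist_triangle4 _ _ _ _
    _ < ε / 3 + ε / 3 + ε / 3 := by
        gcongr
        · exact hxt _ (hFE _)
        · exact hp t ht
        · rw [dist_comm]; exact hxt _ (hFE _)
    _ = ε := by ring

lemma UniformCauchySeqOn.exists_tendstoUniformly {ι X Y : Type*} [UniformSpace Y] [CompleteSpace Y]
    {F : ι → X → Y} {p : Filter ι} [NeBot p] (hF : UniformCauchySeqOn F p univ) :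
    ∃ g, TendstoUniformly F g p := by
  choose g hg using fun x => CompleteSpace.complete (hF.cauchy_map (mem_univ x))
  exact ⟨g, tendstoUniformlyOn_univ.1 (hF.tendstoUniformlyOn_of_tendsto fun x _ => hg x)⟩

lemma Cliquish.of_tendstoUniformly {ι X Y : Type*} [TopologicalSpace X] [MetricSpace Y]
    {F : ι → X → Y} {g : X → Y} {p : Filter ι} [NeBot p] (hF : ∀ᶠ i in p, Cliquish (F i))
    (hFg : TendstoUniformly F g p) : Cliquish g := by
  intro ε hε U hU hUne
  obtain ⟨i, hi, hclose⟩ := (hF.and (tendstoUniformly_iff.1 hFg (ε / 3) (by positivity))).exists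
  obtain ⟨O, hO, hOne, hOU, hosc⟩ := hi (ε / 3) (by positivity) U hU hUne
  refine ⟨O, hO, hOne, hOU, fun a ha b hb => ?_⟩
  calc dist (g a) (g b) ≤ dist (g a) (F i a) + dist (F i a) (F i b) + dist (F i b) (g b) :=
        dist_triangle4 _ _ _ _
    _ < ε / 3 + ε / 3 + ε / 3 := by
        gcongr
        · exact hclose a
        · exact hosc a ha b hb
        · rw [dist_comm]; exact hclose b
    _ = ε := by ring

theorem stmt13 {X Y : Type*} [TopologicalSpace X] [CompactSpace X]
    [MetricSpace Y] [ProperSpace Y]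
    (f : ℕ → X → Y) (hcl : ∀ n, Cliquish (f n))
    (hub : ∃ K : Set Y, IsCompact K ∧ ∀ n, Set.range (f n) ⊆ K)
    (hfe : FinEquicont (Set.range f)) :
    ∃ φ : ℕ → ℕ, StrictMono φ ∧ ∃ g : X → Y, Cliquish g ∧
      TendstoUniformly (fun k => f (φ k)) g atTop := by
  obtain ⟨K, hK, hfK⟩ := hub
  obtain ⟨D, hDc, hnet⟩ := hfe.exists_countable_net
  obtain ⟨φ, hφ, hconv⟩ :=
    exists_subseq_tendsto_on_countable hDc hK fun n x _ => hfK n (mem_range_self x)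
  have hcauchy : UniformCauchySeqOn (fun k => f (φ k)) atTop univ :=
    uniformCauchySeqOn_univ_of_finite_nets (fun k => mem_range_self (φ k)) hnet
      fun x hx => (hconv x hx).choose_spec.cauchySeq
  obtain ⟨g, hg⟩ := hcauchy.exists_tendstoUniformly
  exact ⟨φ, hφ, g, .of_tendstoUniformly (.of_forall fun k => hcl (φ k)) hg, hg⟩
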